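/- Let n ≥ 1 and let (J,γ) be the Cayley algebra of dimension n, i.e., J = ℝⁿ with product (u∙v)_m = Σ_{k=1}^{m-1} u_k v_{m-k} and γ(u,v) = Σ_{k=1}^{n} u_k v_{n+1-k}. Then: (a) every p ∈ J with p∙q = 0 for all q ∈ J lies in the span of the last standard basis vector e_n; and (b) (J,γ) is irreducible, i.e., J admits no decomposition as the direct sum of two nonzero ideals that are mutually γ-orthogonal. -/

import Mathlib

/-! Right multiplication by `e₁` is the coordinate shift `S`, which is nilpotent. Hence every
nonzero ideal contains a nonzero vector killed by `S`, and the kernel of `S` is the line spanned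
by `eₙ`; so every nonzero ideal contains `eₙ`, and two nonzero ideals are never complementary. -/

/-- The product of the Cayley algebra of dimension `n` (0-indexed version of
`(u∙v)_m = Σ_{k=1}^{m-1} u_k v_{m-k}`). -/
def cayleyMul {n : ℕ} (u v : Fin n → ℝ) : Fin n → ℝ := fun m =>
  ∑ p ∈ Finset.univ.filter
    (fun p : Fin n × Fin n => (p.1 : ℕ) + (p.2 : ℕ) + 1 = (m : ℕ)), u p.1 * v p.2

/-- The trace form of the Cayley algebra of dimension `n` (0-indexed version of
`γ(u,v) = Σ_{k=1}^n u_k v_{n+1-k}`). -/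
def cayleyForm {n : ℕ} (u v : Fin n → ℝ) : ℝ := ∑ i : Fin n, u i * v i.rev

namespace Cayley

variable {n : ℕ}

def shift (x : Fin (n + 1) → ℝ) : Fin (n + 1) → ℝ := cayleyMul x (Pi.single 0 1)

lemma shift_apply_zero (x : Fin (n + 1) → ℝ) : shift x 0 = 0 := by
  simp [shift, cayleyMul]

lemma shift_apply_succ (x : Fin (n + 1) → ℝ) (i : Fin n) : shift x i.succ = x i.castSucc := by
  unfold shift cayleyMul
  rw [Finset.sum_eq_single (i.castSucc, 0)]
  · simp
  · rintro ⟨j, k⟩ hjk hne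
    have hk : k ≠ 0 := by
      rintro rfl
      simp only [Finset.mem_filter, Finset.mem_univ, true_and, Fin.val_succ, Fin.val_zero,
        add_zero, add_left_inj] at hjk
      exact hne (Prod.ext (Fin.ext hjk) rfl)
    simp [Pi.single_eq_of_ne hk]
  · simp

lemma mem_span_single_last_of_shift_eq_zero {x : Fin (n + 1) → ℝ} (hx : shift x = 0) :
    x ∈ Submodule.span ℝ {Pi.single (Fin.last n) 1} := by
  refine Submodule.mem_span_singleton.mpr ⟨x (Fin.last n), funext fun i => ?_⟩
  induction i using Fin.lastCases with
  | last => simp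
  | cast i =>
    have h := congrFun hx i.succ
    rw [shift_apply_succ] at h
    simp [h]

lemma iterate_shift_apply_of_lt (x : Fin (n + 1) → ℝ) (k : ℕ) (i : Fin (n + 1))
    (hi : (i : ℕ) < k) : shift^[k] x i = 0 := by
  induction k generalizing i with
  | zero => omega
  | succ k ih =>
    rw [Function.iterate_succ_apply']
    induction i using Fin.cases with
    | zero => exact shift_apply_zero _
    | succ i =>
      rw [shift_apply_succ]
      exact ih _ (by simp at hi ⊢; omega)

lemma iterate_shift_eq_zero (x : Fin (n + 1) → ℝ) : shift^[n + 1] x = 0 :=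
  funext fun i => iterate_shift_apply_of_lt x (n + 1) i i.isLt

lemma single_last_mem_of_ne_bot {I : Submodule ℝ (Fin (n + 1) → ℝ)}
    (hI : ∀ x ∈ I, ∀ y, cayleyMul x y ∈ I) (hne : I ≠ ⊥) :
    Pi.single (Fin.last n) 1 ∈ I := by
  suffices h : ∀ k, ∀ x ∈ I, x ≠ 0 → shift^[k] x = 0 → Pi.single (Fin.last n) 1 ∈ I by
    obtain ⟨x, hxI, hx0⟩ := Submodule.exists_mem_ne_zero_of_ne_bot hne
    exact h _ x hxI hx0 (iterate_shift_eq_zero x)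
  intro k
  induction k with
  | zero => exact fun x _ hx0 hx => absurd hx hx0
  | succ k ih =>
    intro x hxI hx0 hx
    by_cases hsx : shift x = 0
    · obtain ⟨c, rfl⟩ := Submodule.mem_span_singleton.mp
        (mem_span_single_last_of_shift_eq_zero hsx)
      exact (I.smul_mem_iff (left_ne_zero_of_smul hx0)).mp hxI
    · exact ih (shift x) (hI x hxI _) hsx hx

end Cayley

open Cayley in
theorem stmt_15 (n : ℕ) (hn : 1 ≤ n) :
    (∀ p : Fin n → ℝ, (∀ q, cayleyMul p q = 0) →
      p ∈ Submodule.span ℝ {Pi.single (⟨n - 1, by omega⟩ : Fin n) (1 : ℝ)}) ∧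
    ¬(∃ I I' : Submodule ℝ (Fin n → ℝ), I ≠ ⊥ ∧ I' ≠ ⊥ ∧ IsCompl I I' ∧
        (∀ x ∈ I, ∀ y, cayleyMul x y ∈ I) ∧ (∀ x ∈ I', ∀ y, cayleyMul x y ∈ I') ∧
        (∀ x ∈ I, ∀ y ∈ I', cayleyForm x y = 0)) := by
  obtain ⟨m, rfl⟩ : ∃ m, n = m + 1 := ⟨n - 1, by omega⟩
  refine ⟨fun p hp => mem_span_single_last_of_shift_eq_zero (hp _), ?_⟩
  rintro ⟨I, I', hI, hI', hcompl, hIideal, hI'ideal, -⟩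
  have hlast : Pi.single (Fin.last m) (1 : ℝ) ∈ I ⊓ I' :=
    ⟨single_last_mem_of_ne_bot hIideal hI, single_last_mem_of_ne_bot hI'ideal hI'⟩
  rw [hcompl.inf_eq_bot, Submodule.mem_bot] at hlast
  simpa using congrFun hlast (Fin.last m)
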